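/- arXiv:1108.2633 — 2 statements merged into one kernel-verified Lean document; each statement's English description precedes it below -/
import Mathlib

section
/- Let X be uniformly distributed on [0,1], let s ∈ [0,1], and let 0 ≤ a ≤ s ≤ b ≤ 1. Define g(x,0) = x and g(x,1) = 2 − x. Let S = X if X ∈ [a,b] and S = s otherwise, and let R = 1 if X ∈ [a,s) and R = 0 if X ∈ [s,b] or X ∉ [a,b] (with initial r = 0; if X = s take R = 0). Then E[g(S,R)] − g(s,0) = (1/2)(b − a)^2 + (s − a)(2 − s − b), and in particular (b − a)^2 ≤ 2(E[g(S,R)] − g(s,0)). -/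
open MeasureTheory intervalIntegral

open Classical in
/-- One-step expected increment of the bookkeeping function `g` in the
increasing phase (`r = 0`): the expectation over a uniform `X` on `[0,1]` of
`g(S,R) − g(s,0)` equals `½(b−a)² + (s−a)(2−s−b)`, and in particular
`(b−a)² ≤ 2(E[g(S,R)] − g(s,0))`. -/
theorem one_step_increment_increasing (s a b : ℝ)
    (ha : 0 ≤ a) (has : a ≤ s) (hsb : s ≤ b) (hb : b ≤ 1) :
    (∫ x in (0:ℝ)..1,
        ((if a ≤ x ∧ x < s then 2 - x else if s ≤ x ∧ x ≤ b then x else s) - s))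
      = (1 / 2) * (b - a) ^ 2 + (s - a) * (2 - s - b) ∧
    (b - a) ^ 2 ≤ 2 * (∫ x in (0:ℝ)..1,
        ((if a ≤ x ∧ x < s then 2 - x else if s ≤ x ∧ x ≤ b then x else s) - s)) := by
  have hs1 : s ≤ 1 := le_trans hsb hb
  have h0s : 0 ≤ s := le_trans ha has
  have hfun : ∀ x : ℝ,
      ((if a ≤ x ∧ x < s then 2 - x else if s ≤ x ∧ x ≤ b then x else s) - s)
        = (Set.Ico a s).indicator (fun x => 2 - x - s) x
          + (Set.Ioc s b).indicator (fun x => x - s) x := by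
    intro x
    by_cases h1 : a ≤ x ∧ x < s
    · have h2 : ¬ (s < x ∧ x ≤ b) := fun h => absurd h1.2 (not_lt.2 h.1.le)
      simp [Set.indicator, Set.mem_Ico, Set.mem_Ioc, h1, h2]
    · by_cases h3 : s ≤ x ∧ x ≤ b
      · rcases eq_or_lt_of_le h3.1 with h4 | h4
        · simp [Set.indicator, Set.mem_Ico, Set.mem_Ioc, h1, h3, ← h4,
            not_lt.2 (le_refl s)]
        · simp [Set.indicator, Set.mem_Ico, Set.mem_Ioc, h1, h3, h4]
      · have h5 : ¬ (s < x ∧ x ≤ b) := fun h => h3 ⟨h.1.le, h.2⟩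
        simp [Set.indicator, Set.mem_Ico, Set.mem_Ioc, h1, h3, h5]
  have hm1 : MeasurableSet (Set.Ico a s) := measurableSet_Ico
  have hm2 : MeasurableSet (Set.Ioc s b) := measurableSet_Ioc
  have hc1 : Continuous (fun x : ℝ => 2 - x - s) := by continuity
  have hc2 : Continuous (fun x : ℝ => x - s) := by continuity
  have hi1 : IntegrableOn ((Set.Ico a s).indicator (fun x => 2 - x - s))
      (Set.Ioc (0:ℝ) 1) volume :=
    (hc1.integrableOn_Ioc).indicator hm1
  have hi2 : IntegrableOn ((Set.Ioc s b).indicator (fun x => x - s))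
      (Set.Ioc (0:ℝ) 1) volume :=
    (hc2.integrableOn_Ioc).indicator hm2
  have hset1 : (Set.Ioc (0:ℝ) 1 ∩ Set.Ico a s : Set ℝ) =ᵐ[volume] Set.Ioc a s := by
    have heq : (Set.Icc (0:ℝ) 1 ∩ Set.Ico a s : Set ℝ) = Set.Ico a s := by
      apply Set.inter_eq_self_of_subset_right
      intro x hx
      exact ⟨le_trans ha hx.1, le_trans hx.2.le hs1⟩
    have h1 : (Set.Ioc (0:ℝ) 1 ∩ Set.Ico a s : Set ℝ) =ᵐ[volume]
        (Set.Icc (0:ℝ) 1 ∩ Set.Ico a s : Set ℝ) :=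
      Filter.EventuallyEq.inter Ioc_ae_eq_Icc (Filter.EventuallyEq.refl _ _)
    refine h1.trans ?_
    rw [heq]
    exact Ico_ae_eq_Ioc
  have hset2 : Set.Ioc (0:ℝ) 1 ∩ Set.Ioc s b = Set.Ioc s b := by
    apply Set.inter_eq_self_of_subset_right
    intro x hx
    exact ⟨lt_of_le_of_lt h0s hx.1, le_trans hx.2 hb⟩
  have key : (∫ x in (0:ℝ)..1,
      ((if a ≤ x ∧ x < s then 2 - x else if s ≤ x ∧ x ≤ b then x else s) - s))
      = (1 / 2) * (b - a) ^ 2 + (s - a) * (2 - s - b) := by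
    rw [intervalIntegral.integral_of_le (by norm_num : (0:ℝ) ≤ 1)]
    simp_rw [hfun]
    rw [integral_add hi1 hi2, setIntegral_indicator hm1, setIntegral_indicator hm2,
      setIntegral_congr_set hset1, hset2,
      ← intervalIntegral.integral_of_le has, ← intervalIntegral.integral_of_le hsb]
    have e1 : (∫ x in a..s, (2 - x - s)) = (2 - s) * (s - a) - (s^2 - a^2) / 2 := by
      have : ∀ x : ℝ, 2 - x - s = (2 - s) - x := fun x => by ring
      simp_rw [this]
      rw [intervalIntegral.integral_sub intervalIntegrable_const intervalIntegral.intervalIntegrable_id]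
      simp
      ring
    have e2 : (∫ x in s..b, (x - s)) = (b^2 - s^2) / 2 - s * (b - s) := by
      rw [intervalIntegral.integral_sub intervalIntegral.intervalIntegrable_id intervalIntegrable_const]
      simp
      ring
    rw [e1, e2]; ring
  refine ⟨key, ?_⟩
  rw [key]
  nlinarith [sq_nonneg (b - a), mul_nonneg (sub_nonneg.2 has) (by linarith : (0:ℝ) ≤ 2 - s - b)]
end

section
/- Let (Y_i)_{0≤i≤n} be a martingale with Y_0 deterministic, whose differences d_i = Y_i − Y_{i−1} decompose as d_i = W_i + Z_i where W_i is F_{i−1}-measurable and 0 ≤ Z_i ≤ 1 a.s. Then Var[Y_n] ≤ ∑_{i=1}^n E[Z_i]. In particular, if Y_n is a nonnegative integer-valued random variable equal to the number of indices i with Z_i > 0 and E[Z_i | F_{i−1}] equals the conditional probability that Z_i > 0, then Var[Y_n] ≤ E[Y_n]. -/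
/-! Since `𝔼[d_i | 𝓕_{i-1}] = 0` and `W_i` is `𝓕_{i-1}`-measurable, `W_i = -𝔼[Z_i | 𝓕_{i-1}] ≤ 0`
and `W_i` is orthogonal to `d_i`. Hence
`𝔼[d_i²] = 𝔼[d_i Z_i] = 𝔼[Z_i² + W_i Z_i] ≤ 𝔼[Z_i²] ≤ 𝔼[Z_i]`, and orthogonality of the increments
gives `Var[Y_n] ≤ 𝔼[(Y_n - Y_0)²] = ∑ 𝔼[d_i²]`. In the counting case `𝔼[Z_i] = ℙ(Z_i > 0)`, and
these probabilities sum to `𝔼[Y_n]`. -/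

open MeasureTheory ProbabilityTheory

section CondExp

variable {Ω : Type*} {m m0 : MeasurableSpace Ω} {μ : Measure Ω}

theorem integral_mul_eq_zero_of_condExp_ae_eq_zero (hm : m ≤ m0) [SigmaFinite (μ.trim hm)]
    {f g : Ω → ℝ} (hf : StronglyMeasurable[m] f) (hfg : Integrable (f * g) μ)
    (hg : Integrable g μ) (hcond : μ[g | m] =ᵐ[μ] 0) : ∫ ω, f ω * g ω ∂μ = 0 := by
  have hpull : μ[f * g | m] =ᵐ[μ] f * μ[g | m] :=
    condExp_mul_of_stronglyMeasurable_left hf hfg hg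
  calc ∫ ω, f ω * g ω ∂μ = ∫ ω, (μ[f * g | m]) ω ∂μ := (integral_condExp hm).symm
    _ = ∫ ω, (f * μ[g | m]) ω ∂μ := integral_congr_ae hpull
    _ = ∫ _, (0 : ℝ) ∂μ := integral_congr_ae (hcond.mono fun ω hω => by simp [hω])
    _ = 0 := integral_zero Ω ℝ

theorem integral_sq_add_le_integral_of_condExp_ae_eq_zero [IsFiniteMeasure μ] (hm : m ≤ m0)
    {W Z : Ω → ℝ} (hW : StronglyMeasurable[m] W) (hD : MemLp (W + Z) 2 μ)
    (hcond : μ[W + Z | m] =ᵐ[μ] 0) (hZ : ∀ᵐ ω ∂μ, Z ω ∈ Set.Icc (0 : ℝ) 1) :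
    ∫ ω, (W ω + Z ω) ^ 2 ∂μ ≤ ∫ ω, Z ω ∂μ := by
  have hZ_eq : Z = (W + Z) - W := by abel
  have hZ2 : MemLp Z 2 μ := by
    refine MemLp.of_bound ?_ 1 (hZ.mono fun ω hω => ?_)
    · rw [hZ_eq]; exact hD.aestronglyMeasurable.sub (hW.mono hm).aestronglyMeasurable
    · rw [Real.norm_eq_abs, abs_le]; exact ⟨by linarith [hω.1], hω.2⟩
  have hW2 : MemLp W 2 μ := by
    rw [show W = (W + Z) - Z by abel]; exact hD.sub hZ2
  have hWint := hW2.integrable one_le_two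
  have hZint := hZ2.integrable one_le_two
  have hW_nonpos : ∀ᵐ ω ∂μ, W ω ≤ 0 := by
    have hE_nonneg : 0 ≤ᵐ[μ] μ[Z | m] := condExp_nonneg (hZ.mono fun ω hω => hω.1)
    filter_upwards [condExp_add hWint hZint m, hcond, hE_nonneg] with ω hadd hzero hE
    rw [condExp_of_stronglyMeasurable hm hW hWint] at hadd
    simp only [Pi.add_apply, Pi.zero_apply] at hadd hzero hE
    linarith
  have hcross : ∫ ω, W ω * (W ω + Z ω) ∂μ = 0 :=
    integral_mul_eq_zero_of_condExp_ae_eq_zero hm hW (hW2.integrable_mul hD)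
      (hD.integrable one_le_two) hcond
  calc ∫ ω, (W ω + Z ω) ^ 2 ∂μ
      = ∫ ω, (W ω * (W ω + Z ω) + Z ω * (W ω + Z ω)) ∂μ := by congr 1; ext ω; ring
    _ = ∫ ω, W ω * (W ω + Z ω) ∂μ + ∫ ω, Z ω * (W ω + Z ω) ∂μ :=
        integral_add (hW2.integrable_mul hD) (hZ2.integrable_mul hD)
    _ ≤ ∫ ω, Z ω ∂μ := by
      rw [hcross, zero_add]
      refine integral_mono_ae (hZ2.integrable_mul hD) hZint ?_
      filter_upwards [hZ, hW_nonpos] with ω hZω hWω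
      nlinarith [hZω.1, hZω.2]

end CondExp

namespace MeasureTheory.Martingale

variable {Ω : Type*} {m0 : MeasurableSpace Ω} {μ : Measure Ω} [IsFiniteMeasure μ]

theorem condExp_sub_ae_eq_zero {ι E : Type*} [Preorder ι] [NormedAddCommGroup E]
    [NormedSpace ℝ E] [CompleteSpace E] {ℱ : Filtration ι m0} {Y : ι → Ω → E}
    (hY : Martingale Y ℱ μ) {i j : ι} (hij : i ≤ j) : μ[Y j - Y i | ℱ i] =ᵐ[μ] 0 := by
  filter_upwards [condExp_sub (hY.integrable j) (hY.integrable i) (ℱ i),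
    hY.condExp_ae_eq hij] with ω hsub hj
  rw [hsub, Pi.sub_apply, hj,
    condExp_of_stronglyMeasurable (ℱ.le i) (hY.stronglyMeasurable i) (hY.integrable i)]
  exact sub_self _

theorem integral_sq_sub_zero_eq_sum {𝒢 : Filtration ℕ m0} {Y : ℕ → Ω → ℝ}
    (hY : Martingale Y 𝒢 μ) (hL2 : ∀ i, MemLp (Y i) 2 μ) (n : ℕ) :
    ∫ ω, (Y n ω - Y 0 ω) ^ 2 ∂μ = ∑ i ∈ Finset.Icc 1 n, ∫ ω, (Y i ω - Y (i - 1) ω) ^ 2 ∂μ := by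
  induction n with
  | zero => simp
  | succ k ih =>
    rw [Finset.sum_Icc_succ_top (Nat.le_add_left 1 k), ← ih, Nat.add_sub_cancel]
    have hA : MemLp (Y k - Y 0) 2 μ := (hL2 k).sub (hL2 0)
    have hB : MemLp (Y (k + 1) - Y k) 2 μ := (hL2 (k + 1)).sub (hL2 k)
    have hcross : ∫ ω, (Y k ω - Y 0 ω) * (Y (k + 1) ω - Y k ω) ∂μ = 0 :=
      integral_mul_eq_zero_of_condExp_ae_eq_zero (𝒢.le k)
        ((hY.stronglyMeasurable k).sub ((hY.stronglyMeasurable 0).mono (𝒢.mono k.zero_le)))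
        (hA.integrable_mul hB) (hB.integrable one_le_two) (hY.condExp_sub_ae_eq_zero k.le_succ)
    calc ∫ ω, (Y (k + 1) ω - Y 0 ω) ^ 2 ∂μ
        = ∫ ω, ((Y k ω - Y 0 ω) ^ 2 + (2 * ((Y k ω - Y 0 ω) * (Y (k + 1) ω - Y k ω))
            + (Y (k + 1) ω - Y k ω) ^ 2)) ∂μ := by congr 1; ext ω; ring
      _ = ∫ ω, (Y k ω - Y 0 ω) ^ 2 ∂μ
            + (2 * ∫ ω, (Y k ω - Y 0 ω) * (Y (k + 1) ω - Y k ω) ∂μ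
              + ∫ ω, (Y (k + 1) ω - Y k ω) ^ 2 ∂μ) := by
        have hA2 : Integrable (fun ω => (Y k ω - Y 0 ω) ^ 2) μ := hA.integrable_sq
        have hAB : Integrable (fun ω => 2 * ((Y k ω - Y 0 ω) * (Y (k + 1) ω - Y k ω))) μ :=
          (hA.integrable_mul hB).const_mul 2
        have hB2 : Integrable (fun ω => (Y (k + 1) ω - Y k ω) ^ 2) μ := hB.integrable_sq
        rw [integral_add hA2 (hAB.fun_add hB2), integral_add hAB hB2, integral_const_mul]
      _ = ∫ ω, (Y k ω - Y 0 ω) ^ 2 ∂μ + ∫ ω, (Y (k + 1) ω - Y k ω) ^ 2 ∂μ := by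
        rw [hcross, mul_zero, zero_add]

theorem variance_le_sum_integral_of_sub_eq_add [IsProbabilityMeasure μ] {𝒢 : Filtration ℕ m0}
    {Y W Z : ℕ → Ω → ℝ} (hY : Martingale Y 𝒢 μ) (hL2 : ∀ i, MemLp (Y i) 2 μ) {c : ℝ}
    (hY0 : ∀ ω, Y 0 ω = c) (hWmeas : ∀ i, 1 ≤ i → StronglyMeasurable[𝒢 (i - 1)] (W i))
    (hZ : ∀ i, ∀ᵐ ω ∂μ, Z i ω ∈ Set.Icc (0 : ℝ) 1)
    (hdecomp : ∀ i, 1 ≤ i → ∀ ω, Y i ω - Y (i - 1) ω = W i ω + Z i ω) (n : ℕ) :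
    variance (Y n) μ ≤ ∑ i ∈ Finset.Icc 1 n, ∫ ω, Z i ω ∂μ := by
  have hstep (i : ℕ) (hi : 1 ≤ i) :
      ∫ ω, (Y i ω - Y (i - 1) ω) ^ 2 ∂μ ≤ ∫ ω, Z i ω ∂μ := by
    obtain ⟨j, rfl⟩ : ∃ j, i = j + 1 := ⟨i - 1, by omega⟩
    have hD : Y (j + 1) - Y j = W (j + 1) + Z (j + 1) := funext (hdecomp (j + 1) hi)
    simp_rw [hdecomp (j + 1) hi]
    exact integral_sq_add_le_integral_of_condExp_ae_eq_zero (𝒢.le j) (hWmeas (j + 1) hi)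
      (hD ▸ (hL2 _).sub (hL2 _)) (hD ▸ hY.condExp_sub_ae_eq_zero j.le_succ) (hZ (j + 1))
  calc variance (Y n) μ = variance (fun ω => Y n ω - c) μ :=
        (variance_sub_const (hL2 n).aestronglyMeasurable c).symm
    _ ≤ ∫ ω, (Y n ω - Y 0 ω) ^ 2 ∂μ := by
        simpa [hY0] using variance_le_expectation_sq (X := fun ω => Y n ω - c)
          ((hL2 n).sub (memLp_const c)).aestronglyMeasurable
    _ = ∑ i ∈ Finset.Icc 1 n, ∫ ω, (Y i ω - Y (i - 1) ω) ^ 2 ∂μ :=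
        hY.integral_sq_sub_zero_eq_sum hL2 n
    _ ≤ ∑ i ∈ Finset.Icc 1 n, ∫ ω, Z i ω ∂μ :=
        Finset.sum_le_sum fun i hi => hstep i (Finset.mem_Icc.mp hi).1

end MeasureTheory.Martingale

theorem integrable_ite_pos_one_zero {Ω : Type*} {m0 : MeasurableSpace Ω} {μ : Measure Ω}
    [IsFiniteMeasure μ] {f : Ω → ℝ} (hf : Measurable f) :
    Integrable (fun ω => if 0 < f ω then (1 : ℝ) else 0) μ :=
  (integrable_const (1 : ℝ)).indicator (measurableSet_lt measurable_const hf)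

open Classical in
theorem self_bounding_variance_general {Ω : Type*} {m0 : MeasurableSpace Ω}
    (μ : Measure Ω) [IsProbabilityMeasure μ] (𝒢 : Filtration ℕ m0)
    (n : ℕ) (Y : ℕ → Ω → ℝ) (W Z : ℕ → Ω → ℝ)
    (hY : Martingale Y 𝒢 μ) (hL2 : ∀ i, MemLp (Y i) 2 μ)
    (c : ℝ) (hY0 : ∀ ω, Y 0 ω = c)
    (hWmeas : ∀ i, 1 ≤ i → StronglyMeasurable[𝒢 (i - 1)] (W i))
    (hZ : ∀ i, ∀ᵐ ω ∂μ, Z i ω ∈ Set.Icc (0 : ℝ) 1)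
    (hdecomp : ∀ i, 1 ≤ i → ∀ ω, Y i ω - Y (i - 1) ω = W i ω + Z i ω) :
    variance (Y n) μ ≤ ∑ i ∈ Finset.Icc 1 n, ∫ ω, Z i ω ∂μ ∧
    ((∀ ω, Y n ω = ∑ i ∈ Finset.Icc 1 n, (if 0 < Z i ω then (1 : ℝ) else 0)) →
      (∀ i, 1 ≤ i → i ≤ n →
        μ[Z i | 𝒢 (i - 1)] =ᵐ[μ]
          μ[fun ω => if 0 < Z i ω then (1 : ℝ) else 0 | 𝒢 (i - 1)]) →
      variance (Y n) μ ≤ ∫ ω, Y n ω ∂μ) := by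
  have hvar := hY.variance_le_sum_integral_of_sub_eq_add hL2 hY0 hWmeas hZ hdecomp n
  refine ⟨hvar, fun hcount hcond => hvar.trans_eq ?_⟩
  have hZmeas (i : ℕ) (hi : 1 ≤ i) : Measurable (Z i) := by
    rw [show Z i = Y i - Y (i - 1) - W i from funext fun ω => by
      simp only [Pi.sub_apply]; linarith [hdecomp i hi ω]]
    exact ((((hY.stronglyMeasurable i).mono (𝒢.le i)).sub
      ((hY.stronglyMeasurable (i - 1)).mono (𝒢.le _))).sub ((hWmeas i hi).mono (𝒢.le _))).measurable
  calc ∑ i ∈ Finset.Icc 1 n, ∫ ω, Z i ω ∂μ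
      = ∑ i ∈ Finset.Icc 1 n, ∫ ω, (if 0 < Z i ω then (1 : ℝ) else 0) ∂μ := by
        refine Finset.sum_congr rfl fun i hi => ?_
        obtain ⟨hi1, hin⟩ := Finset.mem_Icc.mp hi
        rw [← integral_condExp (𝒢.le (i - 1)), integral_congr_ae (hcond i hi1 hin),
          integral_condExp]
    _ = ∫ ω, Y n ω ∂μ := by
        rw [← integral_finsetSum _ fun i hi =>
          integrable_ite_pos_one_zero (hZmeas i (Finset.mem_Icc.mp hi).1)]
        simp_rw [hcount]

open Classical in
/-- Self-bounding variance argument: if the martingale differences decompose as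
`d_i = W_i + Z_i` with `W_i` predictable and `0 ≤ Z_i ≤ 1`, then
`Var[Y_n] ≤ ∑ E[Z_i]`; and if moreover `Y_n` counts the indices with `Z_i > 0`
and `E[Z_i | F_{i−1}]` is the conditional probability that `Z_i > 0`, then
`Var[Y_n] ≤ E[Y_n]`. -/
theorem self_bounding_variance {Ω : Type*} {m0 : MeasurableSpace Ω}
    (μ : Measure Ω) [IsProbabilityMeasure μ] (𝒢 : Filtration ℕ m0)
    (n : ℕ) (Y : ℕ → Ω → ℝ) (W Z : ℕ → Ω → ℝ)
    (hY : Martingale Y 𝒢 μ) (hL2 : ∀ i, MemLp (Y i) 2 μ)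
    (c : ℝ) (hY0 : ∀ ω, Y 0 ω = c)
    (hWmeas : ∀ i, 1 ≤ i → StronglyMeasurable[𝒢 (i - 1)] (W i))
    (hZmeas : ∀ i, Measurable (Z i))
    (hZ : ∀ i, ∀ᵐ ω ∂μ, Z i ω ∈ Set.Icc (0 : ℝ) 1)
    (hdecomp : ∀ i, 1 ≤ i → ∀ ω, Y i ω - Y (i - 1) ω = W i ω + Z i ω) :
    variance (Y n) μ ≤ ∑ i ∈ Finset.Icc 1 n, ∫ ω, Z i ω ∂μ ∧
    ((∀ ω, Y n ω = ∑ i ∈ Finset.Icc 1 n, (if 0 < Z i ω then (1 : ℝ) else 0)) →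
      (∀ i, 1 ≤ i → i ≤ n →
        μ[Z i | 𝒢 (i - 1)] =ᵐ[μ]
          μ[fun ω => if 0 < Z i ω then (1 : ℝ) else 0 | 𝒢 (i - 1)]) →
      variance (Y n) μ ≤ ∫ ω, Y n ω ∂μ) :=
  self_bounding_variance_general μ 𝒢 n Y W Z hY hL2 c hY0 hWmeas hZ hdecomp
end
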